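/- In the polynomial ring F_2[y_1, y_2, y_3], the subalgebra generated by the four elements y_1, y_2^2, y_3^4, and y_2^3 + y_1·y_3^2 is isomorphic as an F_2-algebra to F_2[a, b, c, d]/(d^2 + b^3 + a^2·c), via a ↦ y_1, b ↦ y_2^2, c ↦ y_3^4, d ↦ y_2^3 + y_1·y_3^2. Equivalently, the kernel of the F_2-algebra map F_2[a,b,c,d] → F_2[y_1,y_2,y_3] determined by these assignments is the principal ideal generated by d^2 + b^3 + a^2c. -/

import Mathlib

/-!
View `𝔽₂[a,b,c,d]` as `𝔽₂[a,b,c][d]`. On `𝔽₂[a,b,c]` the map is the injective substitution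
`a, b, c ↦ y₁, y₂², y₃⁴`, and `d² + b³ + a²c` is a monic quadratic in `d` lying in the kernel
(here characteristic 2 is used). Dividing by it, every kernel element reduces to some `r₀ + r₁ d`
with `r₀(y₁, y₂², y₃⁴) + (y₂³ + y₁y₃²) r₁(y₁, y₂², y₃⁴) = 0`. Grading by the parity of the
`y₂`-degree, `y₂³ r₁(y₁, y₂², y₃⁴)` is the only odd term, so it vanishes; hence `r₁ = 0`, and then
`r₀ = 0`.
-/

open MvPolynomial

namespace Finsupp

variable {σ : Type*}

theorem support_pointwise_smul_subset (w : σ → ℕ) (d : σ →₀ ℕ) : (w • d).support ⊆ d.support := by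
  intro i
  simp +contextual [coe_pointwise_smul]

theorem pointwise_smul_right_injective {w : σ → ℕ} (hw : ∀ i, w i ≠ 0) :
    Function.Injective fun d : σ →₀ ℕ => w • d := fun d d' h => by
  ext i
  simpa [hw i] using DFunLike.congr_fun h i

end Finsupp

theorem Polynomial.ker_eq_span_singleton_of_monic {R S : Type*} [CommRing R] [Nontrivial R]
    [Semiring S] (f : Polynomial R →+* S) {m : Polynomial R} (hm : m.Monic) (hfm : f m = 0)
    (hf : ∀ p : Polynomial R, p.degree < m.degree → f p = 0 → p = 0) :
    RingHom.ker f = Ideal.span {m} := by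
  ext p
  rw [RingHom.mem_ker, Ideal.mem_span_singleton]
  constructor
  · intro hp
    rw [← modByMonic_eq_zero_iff_dvd hm]
    refine hf _ (degree_modByMonic_lt p hm) ?_
    have := congrArg f (modByMonic_add_div p m)
    rwa [map_add, map_mul, hfm, zero_mul, add_zero, hp] at this
  · rintro ⟨q, rfl⟩
    rw [map_mul, hfm, zero_mul]

namespace MvPolynomial

section ExpandBy

variable {σ R : Type*} [CommSemiring R]

noncomputable def expandBy (w : σ → ℕ) : MvPolynomial σ R →ₐ[R] MvPolynomial σ R :=
  aeval fun i => X i ^ w i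

@[simp]
theorem expandBy_X (w : σ → ℕ) (i : σ) : expandBy w (X i : MvPolynomial σ R) = X i ^ w i :=
  aeval_X _ _

@[simp]
theorem expandBy_monomial (w : σ → ℕ) (d : σ →₀ ℕ) (r : R) :
    expandBy w (monomial d r) = monomial (w • d) r := by
  rw [expandBy, aeval_monomial, monomial_eq, Finsupp.prod_of_support_subset (w • d)
    (Finsupp.support_pointwise_smul_subset w d) _ fun i _ => pow_zero _]
  simp [pow_mul, Finsupp.prod, mul_comm]

theorem coeff_expandBy_smul {w : σ → ℕ} (hw : ∀ i, w i ≠ 0) (p : MvPolynomial σ R)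
    (d : σ →₀ ℕ) : (expandBy w p).coeff (w • d) = p.coeff d := by
  classical
  induction p using induction_on' with
  | monomial d' r => simp [coeff_monomial, (Finsupp.pointwise_smul_right_injective hw).eq_iff]
  | add p q hp hq => simp [hp, hq]

theorem expandBy_injective {w : σ → ℕ} (hw : ∀ i, w i ≠ 0) :
    Function.Injective (expandBy w : MvPolynomial σ R → MvPolynomial σ R) := fun p q h => by
  ext d
  rw [← coeff_expandBy_smul hw, h, coeff_expandBy_smul hw]

end ExpandBy

theorem isWeightedHomogeneous_aeval_zero {σ τ R M : Type*} [CommSemiring R] [AddCommMonoid M]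
    {w : σ → M} {f : τ → MvPolynomial σ R} (hf : ∀ i, IsWeightedHomogeneous w (f i) 0)
    (p : MvPolynomial τ R) : IsWeightedHomogeneous w (aeval f p) 0 := by
  induction p using MvPolynomial.induction_on with
  | C r => simpa using isWeightedHomogeneous_C w r
  | add p q hp hq => simpa using hp.add hq
  | mul_X p i hp => simpa using hp.mul (hf i)

section FinSuccEquivLast

variable (R : Type*) [CommSemiring R] (n : ℕ)

noncomputable def finSuccEquivLast :
    MvPolynomial (Fin (n + 1)) R ≃ₐ[R] Polynomial (MvPolynomial (Fin n) R) :=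
  (renameEquiv R _root_.finSuccEquivLast).trans (optionEquivLeft R (Fin n))

variable {R n}

theorem finSuccEquivLast_X_castSucc (i : Fin n) :
    finSuccEquivLast R n (X i.castSucc) = Polynomial.C (X i) := by
  rw [finSuccEquivLast, AlgEquiv.trans_apply, renameEquiv_apply, rename_X,
    finSuccEquivLast_castSucc, optionEquivLeft_X_some]

theorem finSuccEquivLast_X_last : finSuccEquivLast R n (X (Fin.last n)) = Polynomial.X := by
  rw [finSuccEquivLast, AlgEquiv.trans_apply, renameEquiv_apply, rename_X,
    _root_.finSuccEquivLast_last, optionEquivLeft_X_none]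

end FinSuccEquivLast

theorem eq_zero_of_expandBy_add_mul_expandBy_eq_zero {R : Type*} [CommRing R] {w : Fin 3 → ℕ}
    (hw : ∀ i, w i ≠ 0) (hw₁ : Even (w 1)) {r₀ r₁ : MvPolynomial (Fin 3) R}
    (h : expandBy w r₀ + (X 1 ^ 3 + X 0 * X 2 ^ 2) * expandBy w r₁ = 0) : r₀ = 0 ∧ r₁ = 0 := by
  -- the `v`-weight of a monomial is the parity of its `y₂`-exponent
  set v : Fin 3 → ZMod 2 := Pi.single 1 1
  have hexpand (r : MvPolynomial (Fin 3) R) : IsWeightedHomogeneous v (expandBy w r) 0 := by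
    refine isWeightedHomogeneous_aeval_zero (fun i => ?_) r
    convert (isWeightedHomogeneous_X R v i).pow (w i) using 1
    fin_cases i <;> simp [v, ZMod.natCast_eq_zero_iff_even.mpr hw₁]
  have hodd : IsWeightedHomogeneous v (X 1 ^ 3 * expandBy w r₁) 1 := by
    convert ((isWeightedHomogeneous_X R v 1).pow 3).mul (hexpand r₁) using 1
    decide
  have heven : IsWeightedHomogeneous v (X 1 ^ 3 * expandBy w r₁) 0 := by
    have hX : IsWeightedHomogeneous v (X 0 * X 2 ^ 2 : MvPolynomial (Fin 3) R) 0 := by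
      convert (isWeightedHomogeneous_X R v 0).mul ((isWeightedHomogeneous_X R v 2).pow 2) using 1
      simp [v]
    rw [show X 1 ^ 3 * expandBy w r₁ = -(expandBy w r₀ + X 0 * X 2 ^ 2 * expandBy w r₁) by
      linear_combination h]
    exact ((hexpand r₀).add (hX.mul (hexpand r₁))).neg
  have hq : X 1 ^ 3 * expandBy w r₁ = 0 := by
    by_contra hne
    exact zero_ne_one (heven.inj_right hne hodd)
  have hr₁ : r₁ = 0 := (map_eq_zero_iff _ (expandBy_injective hw)).mp
    ((isRegular_X_pow (n := 1) 3).left (hq.trans (mul_zero _).symm))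
  subst hr₁
  refine ⟨(map_eq_zero_iff _ (expandBy_injective hw)).mp ?_, rfl⟩
  simpa using h

section Primitives

variable (R : Type*) [CommRing R]

noncomputable def primitivesMap : Polynomial (MvPolynomial (Fin 3) R) →ₐ[R] MvPolynomial (Fin 3) R :=
  Polynomial.eval₂AlgHom (expandBy ![1, 2, 4]) (X 1 ^ 3 + X 0 * X 2 ^ 2) fun _ => Commute.all _ _

theorem ker_primitivesMap [CharP R 2] :
    RingHom.ker (primitivesMap R) =
      Ideal.span {Polynomial.X ^ 2 + Polynomial.C (X 1 ^ 3 + X 0 ^ 2 * X 2)} := by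
  have : Nontrivial R := CharP.nontrivial_of_char_ne_one (by norm_num : 2 ≠ 1)
  refine Polynomial.ker_eq_span_singleton_of_monic _
    (Polynomial.monic_X_pow_add (Polynomial.degree_C_le.trans_lt (by norm_num))) ?_
    fun p hp hfp => ?_
  · simp only [primitivesMap, AlgHom.toRingHom_eq_coe, RingHom.coe_coe, map_add, map_pow, map_mul,
      Polynomial.eval₂AlgHom_apply, Polynomial.eval₂_X, Polynomial.eval₂_C, expandBy_X,
      Matrix.cons_val, pow_one]
    -- `(y₂³ + y₁y₃²)² + y₂⁶ + y₁²y₃⁴ = 2 (y₂⁶ + y₁y₂³y₃² + y₁²y₃⁴)`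
    linear_combination (X 1 ^ 6 + X 1 ^ 3 * X 0 * X 2 ^ 2 + X 0 ^ 2 * X 2 ^ 4 :
      MvPolynomial (Fin 3) R) * (CharTwo.two_eq_zero : (2 : MvPolynomial (Fin 3) R) = 0)
  · rw [Polynomial.degree_X_pow_add_C two_pos] at hp
    rw [Polynomial.eq_X_add_C_of_degree_le_one (Order.le_of_lt_succ hp)] at hfp ⊢
    simp only [primitivesMap, AlgHom.toRingHom_eq_coe, RingHom.coe_coe, Polynomial.eval₂AlgHom_apply,
      Polynomial.eval₂_add, Polynomial.eval₂_mul, Polynomial.eval₂_C, Polynomial.eval₂_X] at hfp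
    obtain ⟨h₀, h₁⟩ := eq_zero_of_expandBy_add_mul_expandBy_eq_zero (w := ![1, 2, 4])
      (r₀ := p.coeff 0) (r₁ := p.coeff 1) (by decide) (by decide) (by linear_combination hfp)
    simp [h₀, h₁]

end Primitives

end MvPolynomial

/-- The kernel of the `𝔽₂`-algebra map `𝔽₂[a,b,c,d] → 𝔽₂[y₁,y₂,y₃]` determined by
`a ↦ y₁`, `b ↦ y₂²`, `c ↦ y₃⁴`, `d ↦ y₂³ + y₁·y₃²` is the principal ideal generated
by `d² + b³ + a²c`.  Equivalently, the subalgebra of `𝔽₂[y₁,y₂,y₃]` generated by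
these four elements is isomorphic to `𝔽₂[a,b,c,d]/(d² + b³ + a²c)`. -/
theorem kernel_of_primitives_map :
    RingHom.ker (MvPolynomial.aeval
        (![X 0, X 1 ^ 2, X 2 ^ 4, X 1 ^ 3 + X 0 * X 2 ^ 2] :
          Fin 4 → MvPolynomial (Fin 3) (ZMod 2)) :
        MvPolynomial (Fin 4) (ZMod 2) →ₐ[ZMod 2] MvPolynomial (Fin 3) (ZMod 2))
      = Ideal.span {(X 3 : MvPolynomial (Fin 4) (ZMod 2)) ^ 2 + X 1 ^ 3 + X 0 ^ 2 * X 2} := by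
  let e := finSuccEquivLast (ZMod 2) 3
  have he : e (X 0) = Polynomial.C (X 0) ∧ e (X 1) = Polynomial.C (X 1) ∧
      e (X 2) = Polynomial.C (X 2) ∧ e (X 3) = Polynomial.X :=
    ⟨finSuccEquivLast_X_castSucc 0, finSuccEquivLast_X_castSucc 1, finSuccEquivLast_X_castSucc 2,
      finSuccEquivLast_X_last⟩
  have hfactor : aeval ![X 0, X 1 ^ 2, X 2 ^ 4, X 1 ^ 3 + X 0 * X 2 ^ 2] =
      (primitivesMap (ZMod 2)).comp e.toAlgHom := by
    refine algHom_ext fun i => ?_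
    fin_cases i <;> simp [primitivesMap, he]
  have hrel : e (X 3 ^ 2 + X 1 ^ 3 + X 0 ^ 2 * X 2) =
      Polynomial.X ^ 2 + Polynomial.C (X 1 ^ 3 + X 0 ^ 2 * X 2) := by
    simp [he, add_assoc]
  ext p
  rw [RingHom.mem_ker, hfactor, AlgHom.comp_apply, ← RingHom.mem_ker, ker_primitivesMap,
    Ideal.mem_span_singleton, Ideal.mem_span_singleton, ← hrel, AlgEquiv.toAlgHom_apply,
    map_dvd_iff]
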